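/- arXiv:1410.6186 — 2 statements merged into one kernel-verified Lean document; each statement's English description precedes it below -/
import Mathlib

section
/- For the Fejér kernels of a bounded Vilenkin system, with q_A = M_{2A} + M_{2A-2} + ... + M_2 + M_0, if 0 ≤ k ≤ A−3 and k+2 ≤ s ≤ A−1, then for every x ∈ I_{2A} of the form x = (0,...,0, x_{2k} ≠ 0, 0,...,0, x_{2s} ≠ 0, x_{2s+1}, ..., x_{2A-1}, 0, 0, ...) one has q_{A-1} |K_{q_{A-1}}(x)| ≥ M_{2k} M_{2s} / 4, where K_n = (1/n) Σ_{j=1}^{n} D_j is the nth Fejér kernel. -/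
noncomputable section
open MeasureTheory Finset Filter
open scoped ENNReal NNReal

/-- M_0 = 1, M_{k+1} = m_k M_k, where the Vilenkin generating sequence is k ↦ m k + 2
(ensuring every term is at least 2). -/
def Mv (m : ℕ → ℕ) : ℕ → ℕ
  | 0 => 1
  | k + 1 => (m k + 2) * Mv m k

/-- k-th digit of n in the generalized number system. -/
def digit (m : ℕ → ℕ) (n k : ℕ) : ℕ := (n / Mv m k) % (m k + 2)

/-- The Vilenkin group: complete direct product of the cyclic groups Z_{m_k + 2}. -/
abbrev GV (m : ℕ → ℕ) : Type := ∀ k : ℕ, ZMod (m k + 2)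

instance (n : ℕ) : TopologicalSpace (ZMod (n + 2)) := ⊥
instance (n : ℕ) : DiscreteTopology (ZMod (n + 2)) := ⟨rfl⟩

instance (n : ℕ) : MeasurableSpace (ZMod (n + 2)) := ⊤
instance (n : ℕ) : BorelSpace (ZMod (n + 2)) := ⟨(borel_eq_top_of_discrete).symm⟩

/-- The normalized Haar measure on the Vilenkin group. -/
def haarG (m : ℕ → ℕ) : Measure (GV m) :=
  Measure.addHaarMeasure (⊤ : TopologicalSpace.PositiveCompacts (GV m))

/-- Generalized Rademacher function r_k(x) = exp(2πi x_k / m_k). -/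
def rad (m : ℕ → ℕ) (k : ℕ) (x : GV m) : ℂ :=
  Complex.exp (2 * Real.pi * Complex.I * ((x k).val : ℂ) / ((m k + 2 : ℕ) : ℂ))

/-- Vilenkin character ψ_n(x) = ∏_k r_k(x)^{n_k}. -/
def vilenkin (m : ℕ → ℕ) (n : ℕ) (x : GV m) : ℂ :=
  ∏ k ∈ Finset.range n, rad m k x ^ digit m n k

/-- Dirichlet kernel D_n = ∑_{k<n} ψ_k. -/
def DK (m : ℕ → ℕ) (n : ℕ) (x : GV m) : ℂ :=
  ∑ k ∈ Finset.range n, vilenkin m k x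

/-- Fejér kernel K_n = (1/n) ∑_{j=1}^n D_j. -/
def FK (m : ℕ → ℕ) (n : ℕ) (x : GV m) : ℂ :=
  (n : ℂ)⁻¹ * ∑ j ∈ Finset.range n, DK m (j + 1) x

/-- The interval I_n = {x : x_0 = ⋯ = x_{n-1} = 0}. -/
def Iset (m : ℕ → ℕ) (n : ℕ) : Set (GV m) := {x | ∀ k < n, x k = 0}

/-- q_A = M_{2A} + M_{2A-2} + ⋯ + M_2 + M_0. -/
def qA (m : ℕ → ℕ) (A : ℕ) : ℕ := ∑ j ∈ Finset.range (A + 1), Mv m (2 * j)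

/-- Fourier coefficient with respect to the Vilenkin system. -/
def fhat (m : ℕ → ℕ) (f : GV m → ℂ) (k : ℕ) : ℂ :=
  ∫ x, f x * (starRingEnd ℂ) (vilenkin m k x) ∂ haarG m

/-- Partial sums from a given sequence of Fourier coefficients. -/
def Sc (m : ℕ → ℕ) (c : ℕ → ℂ) (n : ℕ) (x : GV m) : ℂ :=
  ∑ v ∈ Finset.range n, c v * vilenkin m v x

/-- Fejér means from a given sequence of Fourier coefficients. -/
def σc (m : ℕ → ℕ) (c : ℕ → ℂ) (n : ℕ) (x : GV m) : ℂ :=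
  (n : ℂ)⁻¹ * ∑ k ∈ Finset.range n, Sc m c k x

/-- Partial sum operator S_n f for integrable f. -/
def Spart (m : ℕ → ℕ) (f : GV m → ℂ) (n : ℕ) (x : GV m) : ℂ :=
  Sc m (fhat m f) n x

/-- The filtration generated by the intervals I_n(x), i.e. by the first n coordinates. -/
def filtrationG (m : ℕ → ℕ) : Filtration ℕ (inferInstance : MeasurableSpace (GV m)) where
  seq n := MeasurableSpace.comap (fun x (k : Fin n) => x k) inferInstance
  mono' := by
    intro a b hab
    show MeasurableSpace.comap (fun (x : GV m) (k : Fin a) => x k) inferInstance ≤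
      MeasurableSpace.comap (fun (x : GV m) (k : Fin b) => x k) inferInstance
    have : (fun (x : GV m) (k : Fin a) => x k) =
        (fun (y : ∀ k : Fin b, ZMod (m k + 2)) (k : Fin a) => y (Fin.castLE hab k)) ∘
          (fun x (k : Fin b) => x k) := rfl
    rw [this, ← MeasurableSpace.comap_comp]
    exact MeasurableSpace.comap_mono
      ((measurable_pi_lambda _ fun k => measurable_pi_apply _).comap_le)
  le' := fun n => (measurable_pi_lambda _ fun k => measurable_pi_apply _).comap_le


/-- Membership in I_{2A}(0,…,0, x_{2k} ≠ 0, 0,…,0, x_{2s} ≠ 0, x_{2s+1}, …, x_{2A-1}):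
the first 2A coordinates vanish except that the 2k-th and 2s-th are nonzero and the
coordinates strictly between 2s and 2A are arbitrary. -/
def Ipat (m : ℕ → ℕ) (k s : ℕ) (x : GV m) : Prop :=
  (∀ j < 2 * k, x j = 0) ∧ x (2 * k) ≠ 0 ∧
    (∀ j, 2 * k < j → j < 2 * s → x j = 0) ∧ x (2 * s) ≠ 0


/-!
Write `F t = q_t K_{q_t}(x)`, `D_n = D_{M_n}(x)` and `E_n = ∑_{r < M_n} r ψ_r(x)`. Splitting
`[0, q_t)` into `[0, M_{2t})` and `M_{2t} + [0, q_{t-1})`, and using `ψ_{M_{2t} + v} = r_{2t} ψ_v`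
for `v < M_{2t}`, gives `F t = q_t D_{2t} - E_{2t} + r_{2t}(x) F (t - 1)`.
Peeling off the top digit, `D_{n+1} = (∑_c r_n^c) D_n` and
`E_{n+1} = M_n (∑_c c r_n^c) D_n + (∑_c r_n^c) E_n`, where `∑_c r_n^c = 0` and
`(r_n - 1) ∑_c c r_n^c = m_n` whenever `x_n ≠ 0`. For our `x` this yields `D_{2t} = 0` for `t > k`,
`(r_{2k} - 1) E_{2t} = M_{2t} M_{2k}` for `k < t ≤ s`, and `E_{2t} = 0` for `t > s`.
Hence `|F (A-1)| = |F s| ≥ c M_{2s} - |F (s-1)|` and `|F (s-1)| ≤ c q_{s-1} + |F k|`, where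
`c = M_{2k} / |r_{2k} - 1| ≥ M_{2k} / 2`, while trivially `|F k| ≤ q_k (q_k + 1) / 2 ≤ 4 M_{2k}² / 3`.
As `M_{n+2} ≥ 4 M_n`, we have `3 q_{s-1} ≤ M_{2s}` and `16 M_{2k} ≤ M_{2s}`, so
`|F (A-1)| ≥ M_{2k} M_{2s} (1/3 - 1/12)`.
-/

variable {m : ℕ → ℕ}

lemma Mv_succ (n : ℕ) : Mv m (n + 1) = (m n + 2) * Mv m n := rfl

lemma Mv_pos (n : ℕ) : 0 < Mv m n := by
  induction n with
  | zero => exact Nat.one_pos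
  | succ n ih => rw [Mv_succ]; positivity

lemma Mv_dvd_Mv {i j : ℕ} (h : i ≤ j) : Mv m i ∣ Mv m j := by
  induction j, h using Nat.le_induction with
  | base => rfl
  | succ j _ ih => exact ih.trans (Dvd.intro_left _ (Mv_succ j).symm)

lemma Mv_mono : Monotone (Mv m) := fun _ _ h => Nat.le_of_dvd (Mv_pos _) (Mv_dvd_Mv h)

lemma two_mul_Mv_le (n : ℕ) : 2 * Mv m n ≤ Mv m (n + 1) :=
  Nat.mul_le_mul_right _ (Nat.le_add_left 2 _)

lemma four_mul_Mv_le (n : ℕ) : 4 * Mv m n ≤ Mv m (n + 2) := by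
  have := two_mul_Mv_le (m := m) n
  have : 2 * Mv m (n + 1) ≤ Mv m (n + 2) := two_mul_Mv_le (n + 1)
  omega

lemma sixteen_mul_Mv_le {i j : ℕ} (h : i + 4 ≤ j) : 16 * Mv m i ≤ Mv m j := by
  have := four_mul_Mv_le (m := m) i
  have : 4 * Mv m (i + 2) ≤ Mv m (i + 2 + 2) := four_mul_Mv_le (i + 2)
  have : Mv m (i + 2 + 2) ≤ Mv m j := Mv_mono h
  omega

lemma lt_Mv (n : ℕ) : n < Mv m n := by
  induction n with
  | zero => exact Nat.one_pos
  | succ n ih => have := two_mul_Mv_le (m := m) n; omega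

lemma digit_eq_zero_of_lt {n j : ℕ} (h : n < Mv m j) : digit m n j = 0 := by
  rw [digit, Nat.div_eq_of_lt h, Nat.zero_mod]

lemma digit_mul_Mv_add {n c u : ℕ} (hc : c < m n + 2) (hu : u < Mv m n) (j : ℕ) :
    digit m (c * Mv m n + u) j = digit m u j + if j = n then c else 0 := by
  rcases lt_trichotomy j n with hjn | rfl | hnj
  · obtain ⟨P, hP⟩ := Mv_dvd_Mv (m := m) (Nat.succ_le_of_lt hjn)
    have : c * Mv m n + u = u + Mv m j * ((m j + 2) * (P * c)) := by
      rw [hP, Mv_succ]; ring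
    rw [if_neg hjn.ne, add_zero, digit, digit, this, Nat.add_mul_div_left _ _ (Mv_pos j),
      Nat.add_mul_mod_self_left]
  · rw [if_pos rfl, digit_eq_zero_of_lt hu, zero_add, digit, mul_comm,
      Nat.mul_add_div (Mv_pos j), Nat.div_eq_of_lt hu, add_zero, Nat.mod_eq_of_lt hc]
  · have hlt : c * Mv m n + u < Mv m j := calc
      c * Mv m n + u < (c + 1) * Mv m n := by rw [add_one_mul]; omega
      _ ≤ Mv m (n + 1) := Nat.mul_le_mul_right _ hc
      _ ≤ Mv m j := Mv_mono hnj
    rw [if_neg hnj.ne', digit_eq_zero_of_lt hlt,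
      digit_eq_zero_of_lt (hu.trans_le (Mv_mono hnj.le))]

lemma isPrimitiveRoot_exp_Mv (k : ℕ) :
    IsPrimitiveRoot (Complex.exp (2 * Real.pi * Complex.I / ((m k + 2 : ℕ) : ℂ))) (m k + 2) :=
  Complex.isPrimitiveRoot_exp _ (by omega)

lemma rad_eq_pow (k : ℕ) (x : GV m) :
    rad m k x = Complex.exp (2 * Real.pi * Complex.I / ((m k + 2 : ℕ) : ℂ)) ^ (x k).val := by
  rw [rad, ← Complex.exp_nat_mul]
  ring_nf

lemma norm_rad (k : ℕ) (x : GV m) : ‖rad m k x‖ = 1 := by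
  rw [rad_eq_pow, norm_pow, (isPrimitiveRoot_exp_Mv k).norm'_eq_one (by omega), one_pow]

lemma norm_rad_sub_one_le (k : ℕ) (x : GV m) : ‖rad m k x - 1‖ ≤ 2 :=
  (norm_sub_le _ _).trans_eq (by rw [norm_rad, norm_one]; norm_num)

lemma rad_pow_eq_one (k : ℕ) (x : GV m) : rad m k x ^ (m k + 2) = 1 := by
  rw [rad_eq_pow, pow_right_comm, (isPrimitiveRoot_exp_Mv k).pow_eq_one, one_pow]

lemma rad_eq_one {k : ℕ} {x : GV m} (h : x k = 0) : rad m k x = 1 := by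
  rw [rad_eq_pow, h, ZMod.val_zero, pow_zero]

lemma rad_ne_one {k : ℕ} {x : GV m} (h : x k ≠ 0) : rad m k x ≠ 1 := by
  rw [rad_eq_pow, Ne, (isPrimitiveRoot_exp_Mv k).pow_eq_one_iff_dvd]
  exact Nat.not_dvd_of_pos_of_lt (ZMod.val_pos.mpr h) (ZMod.val_lt _)

lemma vilenkin_eq_prod_range {n N : ℕ} (h : n ≤ N) (x : GV m) :
    vilenkin m n x = ∏ j ∈ range N, rad m j x ^ digit m n j := by
  refine prod_subset (range_subset_range.mpr h) fun j _ hjn => ?_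
  rw [digit_eq_zero_of_lt ((not_lt.mp (mem_range.not.mp hjn)).trans_lt (lt_Mv j)), pow_zero]

lemma norm_vilenkin (n : ℕ) (x : GV m) : ‖vilenkin m n x‖ = 1 := by
  simp only [vilenkin, norm_prod, norm_pow, norm_rad, one_pow, prod_const_one]

lemma vilenkin_mul_Mv_add {n c u : ℕ} (hc : c < m n + 2) (hu : u < Mv m n) (x : GV m) :
    vilenkin m (c * Mv m n + u) x = rad m n x ^ c * vilenkin m u x := by
  set N := c * Mv m n + u + n + 1
  rw [vilenkin_eq_prod_range (by omega : c * Mv m n + u ≤ N),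
    vilenkin_eq_prod_range (by omega : u ≤ N)]
  simp only [digit_mul_Mv_add hc hu, pow_add, prod_mul_distrib, pow_ite, pow_zero,
    prod_ite_eq', mem_range, show n < N by omega, if_true]
  ring

lemma sum_range_mul_eq {β : Type*} [AddCommMonoid β] (f : ℕ → β) (a b : ℕ) :
    ∑ r ∈ range (b * a), f r = ∑ c ∈ range b, ∑ u ∈ range a, f (c * a + u) := by
  induction b with
  | zero => simp
  | succ b ih => rw [Nat.succ_mul, sum_range_add, ih, sum_range_succ]

lemma sum_range_Mv_succ {β : Type*} [AddCommMonoid β] (f : ℕ → β) (n : ℕ) :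
    ∑ r ∈ range (Mv m (n + 1)), f r =
      ∑ c ∈ range (m n + 2), ∑ u ∈ range (Mv m n), f (c * Mv m n + u) := by
  rw [Mv_succ, sum_range_mul_eq]

lemma geom_sum_eq_zero_of_pow_eq_one {K : Type*} [DivisionRing K] {ρ : K} {N : ℕ}
    (h1 : ρ ≠ 1) (hN : ρ ^ N = 1) : ∑ c ∈ range N, ρ ^ c = 0 := by
  rw [geom_sum_eq h1, hN, sub_self, zero_div]

lemma sub_one_mul_sum_natCast_mul_pow {R : Type*} [CommRing R] (ρ : R) (N : ℕ) :
    (ρ - 1) * ∑ c ∈ range N, (c : R) * ρ ^ c =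
      ((N : R) - 1) * ρ ^ N - ∑ c ∈ range N, ρ ^ c + 1 := by
  induction N with
  | zero => simp
  | succ N ih =>
    rw [sum_range_succ, sum_range_succ (fun c => ρ ^ c), mul_add, ih]
    push_cast
    ring

lemma sub_one_mul_sum_natCast_mul_pow_of_pow_eq_one {K : Type*} [Field K] {ρ : K} {N : ℕ}
    (h1 : ρ ≠ 1) (hN : ρ ^ N = 1) : (ρ - 1) * ∑ c ∈ range N, (c : K) * ρ ^ c = N := by
  rw [sub_one_mul_sum_natCast_mul_pow, hN, geom_sum_eq_zero_of_pow_eq_one h1 hN]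
  ring

def vilenkinMoment (m : ℕ → ℕ) (n : ℕ) (x : GV m) : ℂ :=
  ∑ r ∈ range (Mv m n), (r : ℂ) * vilenkin m r x

section Blocks

variable (x : GV m)

lemma DK_Mv_succ (n : ℕ) :
    DK m (Mv m (n + 1)) x = (∑ c ∈ range (m n + 2), rad m n x ^ c) * DK m (Mv m n) x := by
  rw [DK, DK, sum_range_Mv_succ, sum_mul]
  refine sum_congr rfl fun c hc => ?_
  rw [mul_sum]
  exact sum_congr rfl fun u hu =>
    vilenkin_mul_Mv_add (mem_range.mp hc) (mem_range.mp hu) x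

lemma vilenkinMoment_succ (n : ℕ) :
    vilenkinMoment m (n + 1) x =
      Mv m n * (∑ c ∈ range (m n + 2), (c : ℂ) * rad m n x ^ c) * DK m (Mv m n) x +
        (∑ c ∈ range (m n + 2), rad m n x ^ c) * vilenkinMoment m n x := by
  calc vilenkinMoment m (n + 1) x
      = ∑ c ∈ range (m n + 2), ∑ u ∈ range (Mv m n),
          ((Mv m n : ℂ) * ((c : ℂ) * rad m n x ^ c) * vilenkin m u x +
            rad m n x ^ c * ((u : ℂ) * vilenkin m u x)) := by
        rw [vilenkinMoment, sum_range_Mv_succ]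
        refine sum_congr rfl fun c hc => sum_congr rfl fun u hu => ?_
        rw [vilenkin_mul_Mv_add (mem_range.mp hc) (mem_range.mp hu) x]
        push_cast
        ring
    _ = _ := by
        simp only [sum_add_distrib, ← mul_sum, ← sum_mul, DK, vilenkinMoment]

variable {x}

lemma geom_sum_rad_eq_zero {n : ℕ} (h : x n ≠ 0) : ∑ c ∈ range (m n + 2), rad m n x ^ c = 0 :=
  geom_sum_eq_zero_of_pow_eq_one (rad_ne_one h) (rad_pow_eq_one n x)

lemma DK_Mv_of_forall_eq_zero {n : ℕ} (h : ∀ j < n, x j = 0) : DK m (Mv m n) x = Mv m n := by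
  induction n with
  | zero => simp [DK, Mv, vilenkin]
  | succ n ih =>
    rw [DK_Mv_succ, ih fun j hj => h j (by omega), rad_eq_one (h n n.lt_succ_self), Mv_succ]
    simp

lemma DK_Mv_eq_zero {p n : ℕ} (hp : x p ≠ 0) (hpn : p < n) : DK m (Mv m n) x = 0 := by
  induction n, hpn using Nat.le_induction with
  | base => rw [DK_Mv_succ, geom_sum_rad_eq_zero hp, zero_mul]
  | succ n _ ih => rw [DK_Mv_succ, ih, mul_zero]

lemma rad_sub_one_mul_vilenkinMoment {p n : ℕ} (hbelow : ∀ j < p, x j = 0) (hp : x p ≠ 0)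
    (hpn : p < n) (hgap : ∀ j, p < j → j < n → x j = 0) :
    (rad m p x - 1) * vilenkinMoment m n x = Mv m n * Mv m p := by
  induction n, hpn using Nat.le_induction with
  | base =>
    rw [vilenkinMoment_succ, geom_sum_rad_eq_zero hp, DK_Mv_of_forall_eq_zero hbelow, zero_mul,
      add_zero, Mv_succ]
    have hsum := sub_one_mul_sum_natCast_mul_pow_of_pow_eq_one (rad_ne_one hp) (rad_pow_eq_one p x)
    push_cast at hsum ⊢
    linear_combination (Mv m p : ℂ) ^ 2 * hsum
  | succ n hpn ih =>
    have ih := ih fun j hpj hjn => hgap j hpj (by omega)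
    rw [vilenkinMoment_succ, DK_Mv_eq_zero hp hpn, rad_eq_one (hgap n hpn n.lt_succ_self),
      Mv_succ]
    simp only [one_pow, sum_const, card_range, nsmul_eq_mul, mul_one, mul_zero, zero_add]
    push_cast
    linear_combination ((m n : ℂ) + 2) * ih

lemma vilenkinMoment_eq_zero {p q n : ℕ} (hp : x p ≠ 0) (hpq : p < q) (hq : x q ≠ 0)
    (hqn : q < n) : vilenkinMoment m n x = 0 := by
  induction n, hqn using Nat.le_induction with
  | base => rw [vilenkinMoment_succ, DK_Mv_eq_zero hp hpq, geom_sum_rad_eq_zero hq]; ring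
  | succ n hqn ih => rw [vilenkinMoment_succ, DK_Mv_eq_zero hp (hpq.trans hqn), ih]; ring

end Blocks

section Fejer

variable (x : GV m)

lemma sum_DK_succ (N : ℕ) :
    ∑ j ∈ range N, DK m (j + 1) x = ∑ v ∈ range N, ((N : ℂ) - v) * vilenkin m v x := by
  induction N with
  | zero => simp
  | succ N ih =>
    rw [sum_range_succ, ih, DK, sum_range_succ, sum_range_succ, ← add_assoc, ← sum_add_distrib]
    push_cast
    congr 1
    · exact sum_congr rfl fun v _ => by ring
    · ring

lemma natCast_mul_FK (N : ℕ) :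
    (N : ℂ) * FK m N x = ∑ v ∈ range N, ((N : ℂ) - v) * vilenkin m v x := by
  rcases eq_or_ne N 0 with rfl | hN
  · simp
  · rw [FK, mul_inv_cancel_left₀ (Nat.cast_ne_zero.mpr hN), sum_DK_succ]

lemma two_mul_norm_natCast_mul_FK_le (N : ℕ) :
    2 * ‖(N : ℂ) * FK m N x‖ ≤ N * (N + 1) := by
  have hgauss : ∀ n : ℕ, 2 * ∑ v ∈ range n, ((n : ℝ) - v) = n * (n + 1) := by
    intro n
    induction n with
    | zero => simp
    | succ n ih =>
      rw [sum_range_succ]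
      simp only [Nat.cast_succ, add_sub_right_comm _ (1 : ℝ), sum_add_distrib, sum_const,
        card_range, nsmul_eq_mul, mul_one, mul_add, ih]
      ring
  calc 2 * ‖(N : ℂ) * FK m N x‖
      ≤ 2 * ∑ v ∈ range N, ((N : ℝ) - v) := by
        rw [natCast_mul_FK]
        gcongr
        refine (norm_sum_le _ _).trans (sum_le_sum fun v hv => ?_)
        have hvN : (v : ℝ) ≤ N := by exact_mod_cast (mem_range.mp hv).le
        rw [norm_mul, norm_vilenkin, mul_one, ← Complex.ofReal_natCast, ← Complex.ofReal_natCast,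
          ← Complex.ofReal_sub, Complex.norm_real, Real.norm_of_nonneg (sub_nonneg.mpr hvN)]
    _ = N * (N + 1) := hgauss N

lemma natCast_mul_FK_Mv_add {n b : ℕ} (hb : b ≤ Mv m n) :
    ((Mv m n + b : ℕ) : ℂ) * FK m (Mv m n + b) x =
      ((Mv m n + b : ℕ) : ℂ) * DK m (Mv m n) x - vilenkinMoment m n x +
        rad m n x * ((b : ℂ) * FK m b x) := by
  rw [natCast_mul_FK, natCast_mul_FK, sum_range_add, DK, vilenkinMoment, mul_sum, mul_sum,
    ← sum_sub_distrib]
  congr 1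
  · exact sum_congr rfl fun v _ => by ring
  · refine sum_congr rfl fun v hv => ?_
    have hvM : v < Mv m n := (mem_range.mp hv).trans_le hb
    rw [← one_mul (Mv m n), vilenkin_mul_Mv_add (by omega) hvM, one_mul, pow_one]
    push_cast
    ring

end Fejer

lemma qA_succ (t : ℕ) : qA m (t + 1) = Mv m (2 * (t + 1)) + qA m t := by
  rw [qA, sum_range_succ, add_comm, qA]

lemma three_mul_qA_le (t : ℕ) : 3 * qA m t ≤ 4 * Mv m (2 * t) := by
  induction t with
  | zero => simp [qA, Mv]
  | succ t ih =>
    have := four_mul_Mv_le (m := m) (2 * t)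
    rw [qA_succ, show 2 * (t + 1) = 2 * t + 2 by ring]
    omega

lemma three_mul_qA_le_Mv_succ (t : ℕ) : 3 * qA m t ≤ Mv m (2 * (t + 1)) :=
  (three_mul_qA_le t).trans (four_mul_Mv_le (2 * t))

lemma three_mul_qA_mul_le (t : ℕ) : 3 * qA m t * (qA m t + 1) ≤ 8 * Mv m (2 * t) ^ 2 := by
  rcases Nat.eq_zero_or_pos t with rfl | ht
  · simp [qA, Mv]
  · have hq := three_mul_qA_le (m := m) t
    have h4 : 4 ≤ Mv m (2 * t) := calc
      4 = 4 * Mv m 0 := rfl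
      _ ≤ Mv m 2 := four_mul_Mv_le 0
      _ ≤ Mv m (2 * t) := Mv_mono (by omega)
    nlinarith

lemma three_mul_norm_qA_mul_FK_le (x : GV m) (t : ℕ) :
    3 * ‖(qA m t : ℂ) * FK m (qA m t) x‖ ≤ 4 * (Mv m (2 * t) : ℝ) ^ 2 := by
  have hF := two_mul_norm_natCast_mul_FK_le x (qA m t)
  have hq : (3 * qA m t * (qA m t + 1) : ℝ) ≤ 8 * Mv m (2 * t) ^ 2 := by
    exact_mod_cast three_mul_qA_mul_le t
  nlinarith

lemma qA_mul_FK_succ {x : GV m} {p t : ℕ} (hp : x p ≠ 0) (hpt : p < 2 * (t + 1)) :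
    (qA m (t + 1) : ℂ) * FK m (qA m (t + 1)) x =
      -vilenkinMoment m (2 * (t + 1)) x +
        rad m (2 * (t + 1)) x * ((qA m t : ℂ) * FK m (qA m t) x) := by
  have hq : qA m t ≤ Mv m (2 * (t + 1)) := by have := three_mul_qA_le_Mv_succ (m := m) t; omega
  rw [qA_succ, natCast_mul_FK_Mv_add x hq, DK_Mv_eq_zero hp hpt]
  ring

section Pattern

variable {x : GV m} {k s : ℕ}

lemma norm_vilenkinMoment_of_Ipat (hx : Ipat m k s x) {t : ℕ} (hkt : k < t) (hts : t ≤ s) :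
    ‖vilenkinMoment m (2 * t) x‖ = Mv m (2 * k) / ‖rad m (2 * k) x - 1‖ * Mv m (2 * t) := by
  obtain ⟨hbelow, hxk, hgap, -⟩ := hx
  have h := rad_sub_one_mul_vilenkinMoment hbelow hxk (by omega : 2 * k < 2 * t)
    fun j hkj hjt => hgap j hkj (by omega)
  have hne : ‖rad m (2 * k) x - 1‖ ≠ 0 := norm_ne_zero_iff.mpr (sub_ne_zero.mpr (rad_ne_one hxk))
  apply_fun (‖·‖) at h
  rw [norm_mul, norm_mul, Complex.norm_natCast, Complex.norm_natCast] at h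
  field_simp
  linarith

lemma norm_qA_mul_FK_le_of_Ipat (hx : Ipat m k s x) {t : ℕ} (hkt : k ≤ t) (hts : t ≤ s) :
    ‖(qA m t : ℂ) * FK m (qA m t) x‖ ≤
      Mv m (2 * k) / ‖rad m (2 * k) x - 1‖ * qA m t + ‖(qA m k : ℂ) * FK m (qA m k) x‖ := by
  induction t, hkt using Nat.le_induction with
  | base => exact le_add_of_nonneg_left (by positivity)
  | succ t hkt ih =>
    rw [qA_mul_FK_succ hx.2.1 (by omega), qA_succ]
    calc _ ≤ ‖vilenkinMoment m (2 * (t + 1)) x‖ + ‖(qA m t : ℂ) * FK m (qA m t) x‖ :=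
          (norm_add_le _ _).trans_eq (by rw [norm_neg, norm_mul, norm_rad, one_mul])
      _ ≤ _ := by
          rw [norm_vilenkinMoment_of_Ipat hx (by omega) (by omega)]
          push_cast
          linarith [ih (by omega)]

lemma norm_qA_mul_FK_of_Ipat (hx : Ipat m k s x) (hks : k < s) {t : ℕ} (hst : s ≤ t) :
    ‖(qA m t : ℂ) * FK m (qA m t) x‖ = ‖(qA m s : ℂ) * FK m (qA m s) x‖ := by
  induction t, hst using Nat.le_induction with
  | base => rfl
  | succ t hst ih =>
    rw [qA_mul_FK_succ hx.2.1 (by omega),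
      vilenkinMoment_eq_zero hx.2.1 (by omega : 2 * k < 2 * s) hx.2.2.2 (by omega),
      neg_zero, zero_add, norm_mul, norm_rad, one_mul, ih]

lemma norm_qA_mul_FK_succ_ge_of_Ipat (hx : Ipat m k (s + 1) x) (hks : k ≤ s) :
    Mv m (2 * k) / ‖rad m (2 * k) x - 1‖ * (Mv m (2 * (s + 1)) - qA m s) -
        ‖(qA m k : ℂ) * FK m (qA m k) x‖ ≤
      ‖(qA m (s + 1) : ℂ) * FK m (qA m (s + 1)) x‖ := by
  have hlow := norm_qA_mul_FK_le_of_Ipat hx hks s.le_succ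
  have hlast := norm_sub_le_norm_add (-vilenkinMoment m (2 * (s + 1)) x)
    (rad m (2 * (s + 1)) x * ((qA m s : ℂ) * FK m (qA m s) x))
  rw [norm_neg, norm_mul, norm_rad, one_mul, norm_vilenkinMoment_of_Ipat hx (by omega) le_rfl,
    ← qA_mul_FK_succ hx.2.1 (by omega)] at hlast
  linarith

end Pattern

theorem fejer_kernel_lower_bound_general (m : ℕ → ℕ)
    (A k s : ℕ) (hks : k + 2 ≤ s) (hs : s ≤ A - 1)
    (x : GV m) (hx : Ipat m k s x) :
    ((Mv m (2 * k) : ℝ) * (Mv m (2 * s) : ℝ)) / 4 ≤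
      (qA m (A - 1) : ℝ) * ‖FK m (qA m (A - 1)) x‖ := by
  obtain ⟨s, rfl⟩ : ∃ s', s = s' + 1 := ⟨s - 1, by omega⟩
  set c := (Mv m (2 * k) : ℝ) / ‖rad m (2 * k) x - 1‖
  have hc : (Mv m (2 * k) : ℝ) / 2 ≤ c := div_le_div_of_nonneg_left (by positivity)
    (norm_pos_iff.mpr (sub_ne_zero.mpr (rad_ne_one hx.2.1))) (norm_rad_sub_one_le _ _)
  have hlower := norm_qA_mul_FK_succ_ge_of_Ipat hx (by omega)
  have hFk := three_mul_norm_qA_mul_FK_le x k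
  have hqs : (3 * qA m s : ℝ) ≤ Mv m (2 * (s + 1)) := by exact_mod_cast three_mul_qA_le_Mv_succ s
  have hMs : (16 * Mv m (2 * k) : ℝ) ≤ Mv m (2 * (s + 1)) := by
    exact_mod_cast sixteen_mul_Mv_le (m := m) (by omega : 2 * k + 4 ≤ 2 * (s + 1))
  rw [← Complex.norm_natCast (qA m (A - 1)), ← norm_mul,
    norm_qA_mul_FK_of_Ipat hx (by omega) (by omega)]
  have hMk : (0 : ℝ) ≤ Mv m (2 * k) := by positivity
  nlinarith [mul_le_mul_of_nonneg_right hc (by linarith : (0 : ℝ) ≤ Mv m (2 * (s + 1)) - qA m s),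
    mul_le_mul_of_nonneg_left hMs hMk]

/-- Lemma (BGG): for x of the indicated form, q_{A-1}|K_{q_{A-1}}(x)| ≥ M_{2k}M_{2s}/4. -/
theorem fejer_kernel_lower_bound (m : ℕ → ℕ) (M : ℕ)
    (hM : ∀ j, m j + 2 ≤ M) (hM' : ∃ j, m j + 2 = M)
    (A k s : ℕ) (hA : 2 < A) (hk : k ≤ A - 3) (hks : k + 2 ≤ s) (hs : s ≤ A - 1)
    (x : GV m) (hx : Ipat m k s x) :
    ((Mv m (2 * k) : ℝ) * (Mv m (2 * s) : ℝ)) / 4 ≤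
      (qA m (A - 1) : ℝ) * ‖FK m (qA m (A - 1)) x‖ :=
  fejer_kernel_lower_bound_general m A k s hks hs x hx

end
end

section
/- Let {α_k} satisfy conditions (2)–(4) of the construction and let η, s be integers with ⌊α_k/2⌋ ≤ η ≤ α_k − 3 and η + 2 ≤ s ≤ α_k − 1. Then for x in the set I_{2α_k}^{η,s} = {x ∈ I_{2α_k} : x = (0,...,0, x_{2η} ≠ 0, 0, ..., 0, x_{2s} ≠ 0, x_{2s+1}, ..., x_{2α_k − 1}, ...)}, the Fejér mean of the constructed martingale satisfies |σ_{q_{α_k}} f(x)| ≥ M_{2s} M_{2η} / (8 M² α_k). -/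
/-!
Write `A = α_k`, so that `q_A = M_{2A} + q_{A-1}` with `q_{A-1} ≤ M_{2A}`. On `[M_{2A}, 2 M_{2A})`
the coefficients equal `γ = M_{2A}/(M A)` and `ψ_{M_{2A}+u} = r_{2A} ψ_u`, so `q_A σ_{q_A} f(x)`
is `γ r_{2A}(x) ∑_{n < q_{A-1}} D_n(x)` plus a head of size at most `q_A ∑_{j<k} M_{2α_j}²/α_j`,
which conditions (3) and (4) make small compared with `M_{2s}`.

On `I^{η,s}`, the recursions `D_{M_{n+1}} = (∑_a r_n^a) D_{M_n}` and their analogue for `∑_n D_n`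
show that each block `M_{2j}` with `η < j < s` adds exactly `-M_{2j} M_{2η}/(r_{2η} - 1)` to
`∑_{n<q_j} D_n`. The block `M_{2s}` dominates everything before it, and later blocks only multiply
the sum by a unimodular factor. Hence `|∑_{n<q_B} D_n(x)| ≥ M_{2s} M_{2η}/8` for every `B ≥ s`.
-/

noncomputable section
open MeasureTheory Finset Filter
open scoped ENNReal NNReal

-- The Fourier coefficients of the constructed martingale: M_{2α_k}/(M α_k) on the
-- block [M_{2α_k}, M_{2α_k+1}) and 0 outside all blocks.
open scoped Classical in
def coef (m : ℕ → ℕ) (M : ℕ) (α : ℕ → ℕ) (j : ℕ) : ℂ :=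
  if h : ∃ k, Mv m (2 * α k) ≤ j ∧ j < Mv m (2 * α k + 1) then
    (Mv m (2 * α h.choose) : ℂ) / ((M : ℂ) * (α h.choose : ℂ))
  else 0

namespace Vilenkin

variable {m : ℕ → ℕ}

theorem Mv_succ (k : ℕ) : Mv m (k + 1) = (m k + 2) * Mv m k := rfl

theorem Mv_pos (k : ℕ) : 0 < Mv m k := by
  induction k with
  | zero => exact Nat.one_pos
  | succ k ih => exact Nat.mul_pos (Nat.succ_pos _) ih

theorem two_mul_Mv_le_Mv_succ (k : ℕ) : 2 * Mv m k ≤ Mv m (k + 1) :=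
  Nat.mul_le_mul_right _ (Nat.le_add_left 2 _)

theorem Mv_mono : Monotone (Mv m) :=
  monotone_nat_of_le_succ fun k => by linarith [two_mul_Mv_le_Mv_succ (m := m) k]

theorem two_pow_mul_Mv_le {a b d : ℕ} (h : a + d ≤ b) : 2 ^ d * Mv m a ≤ Mv m b := by
  induction d generalizing b with
  | zero => simpa using Mv_mono (by omega)
  | succ d ih =>
    calc 2 ^ (d + 1) * Mv m a = 2 * (2 ^ d * Mv m a) := by ring
      _ ≤ 2 * Mv m (a + d) := Nat.mul_le_mul_left _ (ih le_rfl)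
      _ ≤ Mv m b := (two_mul_Mv_le_Mv_succ _).trans (Mv_mono (by omega))

theorem lt_Mv_self (n : ℕ) : n < Mv m n :=
  (Nat.lt_two_pow_self).trans_le (by simpa [Mv] using two_pow_mul_Mv_le (m := m) (a := 0) le_rfl)

theorem Mv_dvd_Mv {a b : ℕ} (h : a ≤ b) : Mv m a ∣ Mv m b := by
  induction b, h using Nat.le_induction with
  | base => exact dvd_rfl
  | succ b _ ih => exact ih.mul_left _

theorem mul_Mv_add_lt_Mv_succ {N a u : ℕ} (ha : a < m N + 2) (hu : u < Mv m N) :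
    a * Mv m N + u < Mv m (N + 1) := by
  rw [Mv_succ]; nlinarith

theorem digit_eq_zero_of_lt {n k : ℕ} (h : n < Mv m k) : digit m n k = 0 := by
  rw [digit, Nat.div_eq_of_lt h, Nat.zero_mod]

theorem digit_mul_Mv_add_of_lt {N a u j : ℕ} (hj : j < N) :
    digit m (a * Mv m N + u) j = digit m u j := by
  obtain ⟨c, hc⟩ := Mv_dvd_Mv (m := m) (Nat.succ_le_of_lt hj)
  rw [digit, digit, hc, Mv_succ,
    show a * ((m j + 2) * Mv m j * c) + u = u + a * c * (m j + 2) * Mv m j by ring,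
    Nat.add_mul_div_right _ _ (Mv_pos j), Nat.add_mul_mod_self_right]

theorem digit_mul_Mv_add_self {N a u : ℕ} (ha : a < m N + 2) (hu : u < Mv m N) :
    digit m (a * Mv m N + u) N = a := by
  rw [digit, add_comm, Nat.add_mul_div_right _ _ (Mv_pos N), Nat.div_eq_of_lt hu, zero_add,
    Nat.mod_eq_of_lt ha]

theorem vilenkin_eq_prod_range {n B : ℕ} (x : GV m) (h : n < Mv m B) :
    vilenkin m n x = ∏ k ∈ range B, rad m k x ^ digit m n k := by
  have extend : ∀ {C D : ℕ}, C ≤ D → (∀ k, C ≤ k → digit m n k = 0) →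
      ∏ k ∈ range C, rad m k x ^ digit m n k = ∏ k ∈ range D, rad m k x ^ digit m n k :=
    fun hCD hd => prod_subset (range_subset_range.mpr hCD) fun k _ hk => by
      rw [hd k (by simpa using hk), pow_zero]
  rw [vilenkin, extend (le_max_left n B) fun k hk =>
      digit_eq_zero_of_lt ((lt_Mv_self n).trans_le (Mv_mono hk)),
    extend (le_max_right n B) fun k hk => digit_eq_zero_of_lt (h.trans_le (Mv_mono hk))]

theorem vilenkin_mul_Mv_add {N a u : ℕ} (x : GV m) (ha : a < m N + 2) (hu : u < Mv m N) :
    vilenkin m (a * Mv m N + u) x = rad m N x ^ a * vilenkin m u x := by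
  rw [vilenkin_eq_prod_range x (mul_Mv_add_lt_Mv_succ ha hu),
    vilenkin_eq_prod_range x (hu.trans_le (Mv_mono (Nat.le_succ N))), prod_range_succ,
    prod_range_succ, digit_mul_Mv_add_self ha hu, digit_eq_zero_of_lt hu, pow_zero, mul_one,
    mul_comm]
  congr 1
  exact prod_congr rfl fun k hk => by rw [digit_mul_Mv_add_of_lt (mem_range.mp hk)]

theorem vilenkin_Mv_add {N u : ℕ} (x : GV m) (hu : u < Mv m N) :
    vilenkin m (Mv m N + u) x = rad m N x * vilenkin m u x := by
  simpa using vilenkin_mul_Mv_add (a := 1) x (by omega) hu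

theorem rad_eq_pow (k : ℕ) (x : GV m) :
    rad m k x = Complex.exp (2 * Real.pi * Complex.I / (m k + 2 : ℕ)) ^ (x k).val := by
  rw [rad, ← Complex.exp_nat_mul]
  congr 1
  ring

theorem isPrimitiveRoot_exp_two_pi_I_div (k : ℕ) :
    IsPrimitiveRoot (Complex.exp (2 * Real.pi * Complex.I / (m k + 2 : ℕ))) (m k + 2) :=
  Complex.isPrimitiveRoot_exp _ (by omega)

theorem norm_rad (k : ℕ) (x : GV m) : ‖rad m k x‖ = 1 := by
  rw [rad_eq_pow, norm_pow, (isPrimitiveRoot_exp_two_pi_I_div k).norm'_eq_one (by omega),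
    one_pow]

theorem rad_pow_card (k : ℕ) (x : GV m) : rad m k x ^ (m k + 2) = 1 := by
  rw [rad_eq_pow, pow_right_comm, (isPrimitiveRoot_exp_two_pi_I_div k).pow_eq_one, one_pow]

theorem rad_eq_one {k : ℕ} {x : GV m} (h : x k = 0) : rad m k x = 1 := by
  rw [rad_eq_pow, h, ZMod.val_zero, pow_zero]

theorem rad_ne_one {k : ℕ} {x : GV m} (h : x k ≠ 0) : rad m k x ≠ 1 := by
  rw [rad_eq_pow, Ne, (isPrimitiveRoot_exp_two_pi_I_div k).pow_eq_one_iff_dvd]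
  exact fun hdvd => h ((ZMod.val_eq_zero _).mp (Nat.eq_zero_of_dvd_of_lt hdvd (ZMod.val_lt _)))

theorem geom_sum_rad_eq_zero {k : ℕ} {x : GV m} (h : x k ≠ 0) :
    ∑ a ∈ range (m k + 2), rad m k x ^ a = 0 := by
  rw [geom_sum_eq (rad_ne_one h), rad_pow_card, sub_self, zero_div]

theorem geom_sum_rad_eq_card {k : ℕ} {x : GV m} (h : x k = 0) :
    ∑ a ∈ range (m k + 2), rad m k x ^ a = (m k + 2 : ℕ) := by
  simp [rad_eq_one h]

theorem norm_vilenkin (n : ℕ) (x : GV m) : ‖vilenkin m n x‖ = 1 := by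
  rw [vilenkin, norm_prod]
  exact prod_eq_one fun k _ => by rw [norm_pow, norm_rad, one_pow]

theorem norm_DK_le (n : ℕ) (x : GV m) : ‖DK m n x‖ ≤ n := by
  rw [DK]
  simpa [norm_vilenkin] using norm_sum_le (range n) fun k => vilenkin m k x

theorem sum_range_mul_eq_sum_sum {R : Type*} [AddCommMonoid R] (f : ℕ → R) (p N : ℕ) :
    ∑ v ∈ range (p * N), f v = ∑ a ∈ range p, ∑ u ∈ range N, f (a * N + u) := by
  induction p with
  | zero => simp
  | succ p ih => rw [Nat.succ_mul, sum_range_add, ih, sum_range_succ]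

theorem DK_mul_Mv_add {N a u : ℕ} (x : GV m) (ha : a < m N + 2) (hu : u ≤ Mv m N) :
    DK m (a * Mv m N + u) x
      = (∑ b ∈ range a, rad m N x ^ b) * DK m (Mv m N) x + rad m N x ^ a * DK m u x := by
  rw [DK, DK, DK, sum_range_add, sum_range_mul_eq_sum_sum, sum_mul, mul_sum]
  congr 1 <;> refine sum_congr rfl fun b hb => ?_
  · rw [mul_sum]
    exact sum_congr rfl fun v hv =>
      vilenkin_mul_Mv_add x ((mem_range.mp hb).trans ha) (mem_range.mp hv)
  · exact vilenkin_mul_Mv_add x ha ((mem_range.mp hb).trans_le hu)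

theorem DK_Mv_add {N R : ℕ} (x : GV m) (hR : R ≤ Mv m N) :
    DK m (Mv m N + R) x = DK m (Mv m N) x + rad m N x * DK m R x := by
  simpa using DK_mul_Mv_add (a := 1) x (by omega) hR

theorem DK_Mv_succ (N : ℕ) (x : GV m) :
    DK m (Mv m (N + 1)) x = (∑ a ∈ range (m N + 2), rad m N x ^ a) * DK m (Mv m N) x := by
  rw [Mv_succ, show (m N + 2) * Mv m N = (m N + 1) * Mv m N + Mv m N by ring,
    DK_mul_Mv_add x (Nat.lt_succ_self _) le_rfl, sum_range_succ _ (m N + 1), add_mul]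

theorem DK_Mv_of_forall_eq_zero {N : ℕ} {x : GV m} (h : ∀ k < N, x k = 0) :
    DK m (Mv m N) x = Mv m N := by
  induction N with
  | zero => simp [DK, Mv, vilenkin]
  | succ N ih =>
    rw [DK_Mv_succ, geom_sum_rad_eq_card (h N N.lt_succ_self),
      ih fun k hk => h k (hk.trans N.lt_succ_self), Mv_succ, Nat.cast_mul]

theorem DK_Mv_eq_zero {N k : ℕ} {x : GV m} (hk : k < N) (hx : x k ≠ 0) :
    DK m (Mv m N) x = 0 := by
  induction N, hk using Nat.le_induction with
  | base => rw [DK_Mv_succ, geom_sum_rad_eq_zero hx, zero_mul]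
  | succ N _ ih => rw [DK_Mv_succ, ih, mul_zero]

/-- `(N - 1) • FK m (N - 1) x`, the paper's `q K_q(x)` at `q = N - 1`. -/
def sumDK (m : ℕ → ℕ) (N : ℕ) (x : GV m) : ℂ :=
  ∑ n ∈ range N, DK m n x

theorem norm_sumDK_le (N : ℕ) (x : GV m) : ‖sumDK m N x‖ ≤ N * N := by
  calc ‖sumDK m N x‖ ≤ ∑ n ∈ range N, ‖DK m n x‖ := norm_sum_le _ _
    _ ≤ ∑ _n ∈ range N, (N : ℝ) := sum_le_sum fun n hn =>
        (norm_DK_le n x).trans (by exact_mod_cast (mem_range.mp hn).le)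
    _ = N * N := by simp

theorem sumDK_Mv_add {N R : ℕ} (x : GV m) (hR : R ≤ Mv m N) :
    sumDK m (Mv m N + R) x
      = sumDK m (Mv m N) x + R * DK m (Mv m N) x + rad m N x * sumDK m R x := by
  rw [sumDK, sum_range_add, sum_congr rfl fun u hu => DK_Mv_add x ((mem_range.mp hu).le.trans hR),
    sum_add_distrib, sum_const, card_range, nsmul_eq_mul, ← mul_sum, ← add_assoc]
  rfl

theorem sumDK_Mv_succ (N : ℕ) (x : GV m) :
    sumDK m (Mv m (N + 1)) x
      = Mv m N * DK m (Mv m N) x * ∑ a ∈ range (m N + 2), ∑ b ∈ range a, rad m N x ^ b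
        + (∑ a ∈ range (m N + 2), rad m N x ^ a) * sumDK m (Mv m N) x := by
  rw [sumDK, sumDK, Mv_succ, sum_range_mul_eq_sum_sum, mul_sum, sum_mul, ← sum_add_distrib]
  refine sum_congr rfl fun a ha => ?_
  rw [sum_congr rfl fun u hu =>
      DK_mul_Mv_add x (mem_range.mp ha) (mem_range.mp hu).le,
    sum_add_distrib, sum_const, card_range, nsmul_eq_mul, ← mul_sum]
  ring

theorem sub_one_mul_sum_geom_sum {R : Type*} [CommRing R] (r : R) (p : ℕ) :
    (r - 1) * ∑ a ∈ range p, ∑ b ∈ range a, r ^ b = ∑ a ∈ range p, r ^ a - p := by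
  rw [mul_sum, sum_congr rfl fun a _ => mul_geom_sum r a, sum_sub_distrib, sum_const, card_range,
    nsmul_one]

theorem qA_succ (j : ℕ) : qA m (j + 1) = Mv m (2 * (j + 1)) + qA m j := by
  rw [qA, qA, sum_range_succ, add_comm]

theorem qA_pos (j : ℕ) : 0 < qA m j :=
  (Mv_pos 0).trans_le (single_le_sum (f := fun i => Mv m (2 * i)) (fun _ _ => Nat.zero_le _)
    (mem_range.mpr j.succ_pos))

theorem four_mul_Mv_le (j : ℕ) : 4 * Mv m (2 * j) ≤ Mv m (2 * (j + 1)) :=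
  two_pow_mul_Mv_le (d := 2) (by omega)

theorem three_mul_qA_le (j : ℕ) : 3 * qA m j ≤ 4 * Mv m (2 * j) := by
  induction j with
  | zero => simp [qA, Mv]
  | succ j ih => rw [qA_succ]; linarith [four_mul_Mv_le (m := m) j]

theorem qA_le_Mv_succ (j : ℕ) : qA m j ≤ Mv m (2 * (j + 1)) := by
  linarith [three_mul_qA_le (m := m) j, four_mul_Mv_le (m := m) j]

theorem sumDK_qA_succ (j : ℕ) (x : GV m) :
    sumDK m (qA m (j + 1)) x = sumDK m (Mv m (2 * (j + 1))) x
      + qA m j * DK m (Mv m (2 * (j + 1))) x + rad m (2 * (j + 1)) x * sumDK m (qA m j) x := by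
  rw [qA_succ, sumDK_Mv_add x (qA_le_Mv_succ j)]

theorem norm_rad_sub_one_le (k : ℕ) (x : GV m) : ‖rad m k x - 1‖ ≤ 2 := by
  calc ‖rad m k x - 1‖ ≤ ‖rad m k x‖ + ‖(1 : ℂ)‖ := norm_sub_le _ _
    _ = 2 := by rw [norm_rad, norm_one]; norm_num

section Ipat

variable {η s : ℕ} {x : GV m}

theorem sub_one_mul_sumDK_Mv_of_Ipat (hx : Ipat m η s x) {n : ℕ} (hηn : 2 * η < n)
    (hns : n ≤ 2 * s) :
    (rad m (2 * η) x - 1) * sumDK m (Mv m n) x = -(Mv m n * Mv m (2 * η)) := by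
  induction n, hηn using Nat.le_induction with
  | base =>
    have hW := sub_one_mul_sum_geom_sum (rad m (2 * η) x) (m (2 * η) + 2)
    rw [geom_sum_rad_eq_zero hx.2.1, zero_sub] at hW
    rw [sumDK_Mv_succ, DK_Mv_of_forall_eq_zero hx.1, geom_sum_rad_eq_zero hx.2.1, zero_mul,
      add_zero, Mv_succ]
    push_cast at hW ⊢
    linear_combination (Mv m (2 * η) : ℂ) ^ 2 * hW
  | succ n hn ih =>
    rw [sumDK_Mv_succ, DK_Mv_eq_zero hn hx.2.1, geom_sum_rad_eq_card (hx.2.2.1 n hn (by omega)),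
      Mv_succ]
    push_cast
    linear_combination ((m n : ℂ) + 2) * ih (by omega)

theorem sumDK_Mv_eq_zero_of_Ipat (hx : Ipat m η s x) (hηs : η < s) {n : ℕ} (hsn : 2 * s < n) :
    sumDK m (Mv m n) x = 0 := by
  induction n, hsn using Nat.le_induction with
  | base =>
    rw [sumDK_Mv_succ, DK_Mv_eq_zero (by omega) hx.2.1, geom_sum_rad_eq_zero hx.2.2.2]
    simp
  | succ n _ ih =>
    rw [sumDK_Mv_succ, DK_Mv_eq_zero (by omega) hx.2.1, ih]
    simp

theorem norm_sub_one_mul_sumDK_qA_le_of_Ipat (hx : Ipat m η s x) {j : ℕ} (hηj : η ≤ j)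
    (hjs : j < s) :
    ‖(rad m (2 * η) x - 1) * sumDK m (qA m j) x‖
      ≤ Mv m (2 * η) * qA m j + 2 * (qA m η : ℝ) ^ 2 := by
  induction j, hηj using Nat.le_induction with
  | base =>
    rw [norm_mul]
    have := mul_le_mul (norm_rad_sub_one_le (2 * η) x) (norm_sumDK_le (qA m η) x)
      (norm_nonneg _) zero_le_two
    nlinarith [Nat.cast_nonneg (α := ℝ) (Mv m (2 * η) * qA m η)]
  | succ j hj ih =>
    have hstep : (rad m (2 * η) x - 1) * sumDK m (qA m (j + 1)) x
        = -(Mv m (2 * (j + 1)) * Mv m (2 * η))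
          + (rad m (2 * η) x - 1) * sumDK m (qA m j) x := by
      rw [sumDK_qA_succ, DK_Mv_eq_zero (by omega) hx.2.1,
        rad_eq_one (k := 2 * (j + 1)) (hx.2.2.1 _ (by omega) (by omega)), mul_zero, add_zero,
        one_mul, mul_add,
        sub_one_mul_sumDK_Mv_of_Ipat hx (by omega) (by omega)]
    rw [hstep, qA_succ]
    refine (norm_add_le _ _).trans ?_
    rw [norm_neg, ← Nat.cast_mul, Complex.norm_natCast]
    push_cast
    linarith [ih (by omega)]

theorem le_norm_sumDK_qA_self_of_Ipat (hx : Ipat m η s x) (hηs : η + 2 ≤ s) :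
    (Mv m (2 * s) * Mv m (2 * η) : ℝ) / 8 ≤ ‖sumDK m (qA m s) x‖ := by
  obtain ⟨t, rfl⟩ : ∃ t, s = t + 1 := ⟨s - 1, by omega⟩
  have hstep : (rad m (2 * η) x - 1) * sumDK m (qA m (t + 1)) x
      = -(Mv m (2 * (t + 1)) * Mv m (2 * η))
        + rad m (2 * (t + 1)) x * ((rad m (2 * η) x - 1) * sumDK m (qA m t) x) := by
    rw [sumDK_qA_succ, DK_Mv_eq_zero (by omega) hx.2.1, mul_zero, add_zero, mul_add,
      sub_one_mul_sumDK_Mv_of_Ipat hx (by omega) le_rfl]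
    ring
  have hlow : (Mv m (2 * (t + 1)) * Mv m (2 * η) : ℝ)
        - (Mv m (2 * η) * qA m t + 2 * (qA m η : ℝ) ^ 2)
      ≤ ‖rad m (2 * η) x - 1‖ * ‖sumDK m (qA m (t + 1)) x‖ := by
    rw [← norm_mul, hstep]
    refine le_trans ?_ (norm_sub_le_norm_add _ _)
    rw [norm_neg, norm_mul, norm_mul (rad _ _ _), norm_rad, one_mul, Complex.norm_natCast,
      Complex.norm_natCast]
    linarith [norm_sub_one_mul_sumDK_qA_le_of_Ipat hx (j := t) (by omega) (by omega)]
  have hqt : 3 * (qA m t : ℝ) ≤ Mv m (2 * (t + 1)) := by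
    exact_mod_cast (three_mul_qA_le t).trans (four_mul_Mv_le t)
  have hqη : 3 * (qA m η : ℝ) ≤ 4 * Mv m (2 * η) := by exact_mod_cast three_mul_qA_le η
  have hab : 16 * (Mv m (2 * η) : ℝ) ≤ Mv m (2 * (t + 1)) := by
    exact_mod_cast two_pow_mul_Mv_le (m := m) (d := 4) (by omega)
  have hb : (1 : ℝ) ≤ Mv m (2 * η) := by exact_mod_cast Mv_pos (m := m) (2 * η)
  have hr := mul_le_mul_of_nonneg_right (norm_rad_sub_one_le (2 * η) x)
    (norm_nonneg (sumDK m (qA m (t + 1)) x))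
  -- with `a = M_{2s}`, `b = M_{2η}`: `ab - b q_t - 2 q_η² ≥ ab (1 - 1/3 - 2/9)`, and
  -- `‖r - 1‖ ≤ 2` halves this to `2ab/9 ≥ ab/8`
  nlinarith [Nat.cast_nonneg (α := ℝ) (qA m η), Nat.cast_nonneg (α := ℝ) (qA m t)]

theorem norm_sumDK_qA_eq_of_Ipat (hx : Ipat m η s x) (hηs : η < s) {j : ℕ} (hsj : s ≤ j) :
    ‖sumDK m (qA m j) x‖ = ‖sumDK m (qA m s) x‖ := by
  induction j, hsj using Nat.le_induction with
  | base => rfl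
  | succ j _ ih =>
    rw [sumDK_qA_succ, sumDK_Mv_eq_zero_of_Ipat hx hηs (by omega), DK_Mv_eq_zero (by omega) hx.2.1,
      mul_zero, add_zero, zero_add, norm_mul, norm_rad, one_mul, ih]

theorem le_norm_sumDK_qA_of_Ipat (hx : Ipat m η s x) (hηs : η + 2 ≤ s) {B : ℕ}
    (hsB : s ≤ B) :
    (Mv m (2 * s) * Mv m (2 * η) : ℝ) / 8 ≤ ‖sumDK m (qA m B) x‖ := by
  rw [norm_sumDK_qA_eq_of_Ipat hx (by omega) hsB]
  exact le_norm_sumDK_qA_self_of_Ipat hx hηs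

end Ipat

theorem Sc_Mv_add {c : ℕ → ℂ} {γ : ℂ} {N R : ℕ} (x : GV m) (hR : R ≤ Mv m N)
    (hc : ∀ u < R, c (Mv m N + u) = γ) :
    Sc m c (Mv m N + R) x = Sc m c (Mv m N) x + γ * rad m N x * DK m R x := by
  rw [Sc, Sc, DK, sum_range_add, mul_sum]
  congr 1
  refine sum_congr rfl fun u hu => ?_
  rw [hc u (mem_range.mp hu), vilenkin_Mv_add x ((mem_range.mp hu).trans_le hR), mul_assoc]

theorem sum_Sc_Mv_add {c : ℕ → ℂ} {γ : ℂ} {N Q : ℕ} (x : GV m) (hQ : Q ≤ Mv m N)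
    (hc : ∀ u < Q, c (Mv m N + u) = γ) :
    ∑ n ∈ range (Mv m N + Q), Sc m c n x
      = (∑ n ∈ range (Mv m N), Sc m c n x + Q * Sc m c (Mv m N) x)
        + γ * rad m N x * sumDK m Q x := by
  rw [sum_range_add, sum_congr rfl fun u hu => Sc_Mv_add x ((mem_range.mp hu).le.trans hQ)
      fun v hv => hc v (hv.trans (mem_range.mp hu)),
    sum_add_distrib, sum_const, card_range, nsmul_eq_mul, sumDK, mul_sum, add_assoc]

theorem norm_Sc_le {c : ℕ → ℂ} {n K : ℕ} (x : GV m) (hn : n ≤ K) :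
    ‖Sc m c n x‖ ≤ ∑ v ∈ range K, ‖c v‖ :=
  calc ‖Sc m c n x‖ ≤ ∑ v ∈ range n, ‖c v * vilenkin m v x‖ := norm_sum_le _ _
    _ = ∑ v ∈ range n, ‖c v‖ := by simp only [norm_mul, norm_vilenkin, mul_one]
    _ ≤ _ := sum_le_sum_of_subset_of_nonneg (range_subset_range.2 hn) fun _ _ _ => norm_nonneg _

theorem coef_eq {M : ℕ} {α : ℕ → ℕ} {t j : ℕ} (h1 : Mv m (2 * α t) ≤ j)
    (h2 : j < Mv m (2 * α t + 1)) :
    coef m M α j = Mv m (2 * α t) / (M * α t) := by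
  have hex : ∃ u, Mv m (2 * α u) ≤ j ∧ j < Mv m (2 * α u + 1) := ⟨t, h1, h2⟩
  obtain ⟨h1', h2'⟩ := hex.choose_spec
  -- distinct blocks `[M_{2a}, M_{2a+1})` are disjoint
  have heq : α hex.choose = α t := by
    by_contra hne
    rcases Nat.lt_or_gt_of_ne hne with hlt | hlt
    · have := Mv_mono (m := m) (show 2 * α hex.choose + 1 ≤ 2 * α t by omega); omega
    · have := Mv_mono (m := m) (show 2 * α t + 1 ≤ 2 * α hex.choose by omega); omega
  rw [coef, dif_pos hex, heq]

theorem norm_coef_le_sum_ite {M : ℕ} {α : ℕ → ℕ} (hα : StrictMono α) {k v : ℕ}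
    (hv : v < Mv m (2 * α k)) :
    ‖coef m M α v‖ ≤ ∑ j ∈ range k,
      if Mv m (2 * α j) ≤ v ∧ v < Mv m (2 * α j + 1) then (Mv m (2 * α j) / (M * α j) : ℝ)
      else 0 := by
  have hnonneg : ∀ j ∈ range k, (0 : ℝ) ≤
      if Mv m (2 * α j) ≤ v ∧ v < Mv m (2 * α j + 1) then (Mv m (2 * α j) / (M * α j) : ℝ)
      else 0 := fun j _ => by split_ifs <;> positivity
  by_cases hex : ∃ t, Mv m (2 * α t) ≤ v ∧ v < Mv m (2 * α t + 1)
  · obtain ⟨t, ht⟩ := hex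
    have htk : t < k := hα.lt_iff_lt.mp (by
      by_contra hle
      have := Mv_mono (m := m) (show 2 * α k ≤ 2 * α t by omega)
      omega)
    refine le_of_eq_of_le ?_ (single_le_sum hnonneg (mem_range.mpr htk))
    rw [coef_eq ht.1 ht.2, if_pos ht]
    simp only [norm_div, norm_mul, Complex.norm_natCast]
  · rw [coef, dif_neg hex, norm_zero]
    exact sum_nonneg hnonneg

def blockSum (m : ℕ → ℕ) (α : ℕ → ℕ) (k : ℕ) : ℝ :=
  ∑ j ∈ range k, (Mv m (2 * α j) : ℝ) ^ 2 / α j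

theorem sum_norm_coef_le_blockSum {M : ℕ} {α : ℕ → ℕ} (hα : StrictMono α)
    (hM : ∀ i, m i + 2 ≤ M) (k : ℕ) :
    ∑ v ∈ range (Mv m (2 * α k)), ‖coef m M α v‖ ≤ blockSum m α k := by
  refine (sum_le_sum fun v hv => norm_coef_le_sum_ite hα (mem_range.mp hv)).trans ?_
  rw [sum_comm, blockSum]
  refine sum_le_sum fun j _ => ?_
  set n := Mv m (2 * α j)
  have hcard : ((range (Mv m (2 * α k))).filter fun v => n ≤ v ∧ v < Mv m (2 * α j + 1)).card
      ≤ M * n := by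
    refine (card_le_card (t := Ico n (Mv m (2 * α j + 1))) fun v hv => ?_).trans
      ((Nat.card_Ico _ _).trans_le ?_)
    · simp only [mem_filter] at hv
      exact mem_Ico.mpr hv.2
    · rw [Mv_succ, Nat.sub_le_iff_le_add]
      nlinarith [hM (2 * α j)]
  have hM0 : (M : ℝ) ≠ 0 := by exact_mod_cast (Nat.lt_of_lt_of_le (by omega) (hM 0)).ne'
  rw [sum_ite, sum_const_zero, add_zero, sum_const, nsmul_eq_mul]
  calc _ ≤ ((M * n : ℕ) : ℝ) * (n / (M * α j)) := by gcongr
    _ = (n : ℝ) ^ 2 / α j := by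
      rw [Nat.cast_mul, mul_div_assoc', mul_assoc, mul_div_mul_left _ _ hM0, sq]

theorem mul_blockSum_le_Mv {M : ℕ} {α : ℕ → ℕ} (hα : StrictMono α)
    (h3 : ∀ k, 1 ≤ k → blockSum m α k < (Mv m (2 * α k) : ℝ) ^ 2 / α k)
    (h4 : ∀ k, 1 ≤ k →
      32 * (M : ℝ) * (Mv m (2 * α (k - 1)) : ℝ) ^ 2 / α (k - 1) < Mv m (α k) / α k)
    {k n : ℕ} (hk : 1 ≤ k) (hn : α k < n) :
    32 * M * α k * blockSum m α k ≤ Mv m n := by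
  obtain ⟨k, rfl⟩ : ∃ k', k = k' + 1 := ⟨k - 1, by omega⟩
  set X : ℝ := (Mv m (2 * α k) : ℝ) ^ 2 / α k
  have hS : blockSum m α (k + 1) ≤ 2 * X := by
    rw [blockSum, sum_range_succ, ← blockSum]
    rcases Nat.eq_zero_or_pos k with rfl | hk0
    · have : 0 ≤ X := by positivity
      simp only [blockSum, range_zero, sum_empty]
      linarith
    · linarith [h3 k hk0]
  have hαpos : (0 : ℝ) < α (k + 1) := by
    exact_mod_cast (Nat.zero_le _).trans_lt (hα k.lt_succ_self)
  have h4k : 32 * M * X * α (k + 1) < Mv m (α (k + 1)) := by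
    have := h4 (k + 1) (by omega)
    rw [Nat.add_sub_cancel, ← mul_div_assoc', lt_div_iff₀ hαpos] at this
    simpa [X, mul_div_assoc] using this
  have hMv : 2 * (Mv m (α (k + 1)) : ℝ) ≤ Mv m n := by
    exact_mod_cast two_pow_mul_Mv_le (m := m) (d := 1) (by omega)
  have hM : (0 : ℝ) ≤ M := Nat.cast_nonneg M
  nlinarith [mul_le_mul_of_nonneg_left hS (by positivity : (0 : ℝ) ≤ 32 * M * α (k + 1))]

theorem norm_sum_Sc_add_mul_Sc_le {c : ℕ → ℂ} (K Q : ℕ) (x : GV m) :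
    ‖∑ n ∈ range K, Sc m c n x + Q * Sc m c K x‖ ≤ (K + Q) * ∑ v ∈ range K, ‖c v‖ :=
  calc _ ≤ ∑ n ∈ range K, ‖Sc m c n x‖ + Q * ‖Sc m c K x‖ := by
        refine (norm_add_le _ _).trans (add_le_add (norm_sum_le _ _) ?_)
        rw [norm_mul, Complex.norm_natCast]
    _ ≤ ∑ _n ∈ range K, ∑ v ∈ range K, ‖c v‖ + Q * ∑ v ∈ range K, ‖c v‖ := by
        gcongr with n hn
        · exact norm_Sc_le x (mem_range.mp hn).le
        · exact norm_Sc_le x le_rfl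
    _ = _ := by rw [sum_const, card_range, nsmul_eq_mul, add_mul]

theorem le_norm_σc_coef {M : ℕ} {α : ℕ → ℕ} (hα : StrictMono α) (hM : ∀ i, m i + 2 ≤ M)
    {k : ℕ} (hk : 1 ≤ α k) (x : GV m) :
    3 / (4 * M * α k) * ‖sumDK m (qA m (α k - 1)) x‖ - blockSum m α k
      ≤ ‖σc m (coef m M α) (qA m (α k)) x‖ := by
  set A := α k
  set MA := Mv m (2 * A)
  set Q := qA m (A - 1)
  have hq : qA m A = MA + Q := by
    rw [show A = A - 1 + 1 by omega, qA_succ, Nat.sub_add_cancel hk]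
  have hQ : Q ≤ MA := by simpa [Nat.sub_add_cancel hk] using qA_le_Mv_succ (m := m) (A - 1)
  have hcoef : ∀ u < Q, coef m M α (MA + u) = ((MA / (M * A) : ℝ) : ℂ) := fun u hu => by
    rw [coef_eq (Nat.le_add_right _ _) (by linarith [two_mul_Mv_le_Mv_succ (m := m) (2 * A)])]
    push_cast; rfl
  have hqpos : (0 : ℝ) < qA m A := by exact_mod_cast qA_pos A
  have hMpos : (0 : ℝ) < M := by exact_mod_cast Nat.lt_of_lt_of_le (by omega) (hM 0)
  have hApos : (0 : ℝ) < A := by exact_mod_cast hk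
  have hlow : MA / (M * A) * ‖sumDK m Q x‖ - qA m A * blockSum m α k
      ≤ qA m A * ‖σc m (coef m M α) (qA m A) x‖ := by
    have hhead := (norm_sum_Sc_add_mul_Sc_le (c := coef m M α) MA Q x).trans
      (mul_le_mul_of_nonneg_left (sum_norm_coef_le_blockSum hα hM k) (by positivity))
    rw [σc, norm_mul, norm_inv, Complex.norm_natCast, ← mul_assoc,
      mul_inv_cancel₀ hqpos.ne', one_mul, hq, sum_Sc_Mv_add x hQ hcoef]
    refine le_trans ?_ ((norm_sub_le_norm_add _ _).trans_eq (congrArg norm (add_comm _ _)))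
    rw [norm_mul, norm_mul, norm_rad, mul_one, Complex.norm_real, Real.norm_of_nonneg
      (by positivity)]
    push_cast at hhead ⊢
    linarith
  have hγ : 3 * (qA m A : ℝ) / (4 * M * A) ≤ MA / (M * A) := by
    rw [div_le_div_iff₀ (by positivity) (by positivity)]
    have : 3 * (qA m A : ℝ) ≤ 4 * MA := by exact_mod_cast three_mul_qA_le A
    nlinarith [mul_le_mul_of_nonneg_left this (mul_pos hMpos hApos).le]
  refine le_of_mul_le_mul_left ?_ hqpos
  calc _ = 3 * (qA m A : ℝ) / (4 * M * A) * ‖sumDK m Q x‖ - qA m A * blockSum m α k := by ring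
    _ ≤ MA / (M * A) * ‖sumDK m Q x‖ - qA m A * blockSum m α k := by gcongr
    _ ≤ _ := hlow

end Vilenkin

theorem fejer_mean_pointwise_lower_bound_general (m : ℕ → ℕ) (M : ℕ) (α : ℕ → ℕ)
    (hα : StrictMono α)
    (hM : ∀ k, m k + 2 ≤ M)
    (h3 : ∀ k, 1 ≤ k →
      ∑ η ∈ Finset.range k, ((Mv m (2 * α η) : ℝ)) ^ 2 / (α η : ℝ) <
        ((Mv m (2 * α k) : ℝ)) ^ 2 / (α k : ℝ))
    (h4 : ∀ k, 1 ≤ k →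
      32 * (M : ℝ) * ((Mv m (2 * α (k - 1)) : ℝ)) ^ 2 / (α (k - 1) : ℝ) <
        (Mv m (α k) : ℝ) / (α k : ℝ))
    (k η s : ℕ) (hk : 1 ≤ k)
    (hη1 : α k / 2 ≤ η) (hs1 : η + 2 ≤ s) (hs2 : s ≤ α k - 1)
    (x : GV m) (hx : Ipat m η s x) :
    ((Mv m (2 * s) : ℝ) * (Mv m (2 * η) : ℝ)) / (8 * (M : ℝ) ^ 2 * (α k : ℝ)) ≤
      ‖σc m (coef m M α) (qA m (α k)) x‖ := by
  have hb : (1 : ℝ) ≤ Mv m (2 * η) := by exact_mod_cast Vilenkin.Mv_pos (2 * η)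
  have hF := Vilenkin.le_norm_sumDK_qA_of_Ipat hx hs1 (B := α k - 1) hs2
  have hS := Vilenkin.mul_blockSum_le_Mv hα h3 h4 hk (n := 2 * s) (by omega)
  have hσ := Vilenkin.le_norm_σc_coef hα hM (k := k) (by omega) x
  set a : ℝ := (Mv m (2 * s) : ℝ)
  set b : ℝ := (Mv m (2 * η) : ℝ)
  set S := Vilenkin.blockSum m α k
  have hM2 : (2 : ℝ) ≤ M := by exact_mod_cast (Nat.le_add_left 2 _).trans (hM 0)
  have hA : (0 : ℝ) < α k := by exact_mod_cast (show 0 < α k by omega)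
  have ha : 0 ≤ a := Nat.cast_nonneg _
  have hSa : S ≤ a / (32 * M * α k) := by rw [le_div_iff₀ (by positivity)]; linarith
  have hsplit : 3 / (4 * M * α k) * (a * b / 8) - a / (32 * M * α k) - a * b / (8 * M ^ 2 * α k)
      = a * (b * (3 * M - 4) - M) / (32 * M ^ 2 * α k) := by
    field_simp
    ring
  have hgap : 0 ≤ a * (b * (3 * M - 4) - M) / (32 * M ^ 2 * α k) := by
    apply div_nonneg (mul_nonneg ha (by nlinarith)) (by positivity)
  calc a * b / (8 * M ^ 2 * α k) ≤ 3 / (4 * M * α k) * (a * b / 8) - a / (32 * M * α k) := by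
        linarith
    _ ≤ 3 / (4 * M * α k) * ‖Vilenkin.sumDK m (qA m (α k - 1)) x‖ - S := by gcongr
    _ ≤ _ := hσ

/-- Pointwise lower bound for the Fejér mean σ_{q_{α_k}} f on the set I_{2α_k}^{η,s}. -/
theorem fejer_mean_pointwise_lower_bound (m : ℕ → ℕ) (M : ℕ) (α : ℕ → ℕ)
    (hα : StrictMono α) (hα0 : 0 < α 0)
    (hM : ∀ k, m k + 2 ≤ M) (hM' : ∃ k, m k + 2 = M)
    (h2 : Summable fun k => ((α k : ℝ)) ^ (-(2 : ℝ)⁻¹))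
    (h3 : ∀ k, 1 ≤ k →
      ∑ η ∈ Finset.range k, ((Mv m (2 * α η) : ℝ)) ^ 2 / (α η : ℝ) <
        ((Mv m (2 * α k) : ℝ)) ^ 2 / (α k : ℝ))
    (h4 : ∀ k, 1 ≤ k →
      32 * (M : ℝ) * ((Mv m (2 * α (k - 1)) : ℝ)) ^ 2 / (α (k - 1) : ℝ) <
        (Mv m (α k) : ℝ) / (α k : ℝ))
    (k η s : ℕ) (hk : 1 ≤ k)
    (hη1 : α k / 2 ≤ η) (hη2 : η ≤ α k - 3) (hs1 : η + 2 ≤ s) (hs2 : s ≤ α k - 1)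
    (x : GV m) (hx : Ipat m η s x) :
    ((Mv m (2 * s) : ℝ) * (Mv m (2 * η) : ℝ)) / (8 * (M : ℝ) ^ 2 * (α k : ℝ)) ≤
      ‖σc m (coef m M α) (qA m (α k)) x‖ :=
  fejer_mean_pointwise_lower_bound_general m M α hα hM h3 h4 k η s hk hη1 hs1 hs2 x hx

end
end
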